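/- arXiv:2503.07296 — 2 statements merged into one kernel-verified Lean document; each statement's English description precedes it below -/
import Mathlib

section
/- Let M and Z be independent random variables, each exponentially distributed with means β and Nβ' respectively (β, β', N > 0). Then for any c > 0, P[MZ < c] = 1 - √(4c/(ββ'N)) · K₁(√(4c/(ββ'N))), where K₁ is the modified Bessel function of the second kind of order 1. -/
/-!
Independence makes the law of `(M, Z)` the product of two exponential laws with rates
`r = 1/β` and `r' = 1/(Nβ')`. Integrating the exponential tail of `Z` against the density of `M`
gives `P[MZ < c] = 1 - ∫₀^∞ r exp(-r x - r' c / x) dx`. The substitution `x = s eᵗ` with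
`s = √(r' c / r)` turns the exponent into `-2√(r r' c) cosh t`, and folding the resulting integral
over `ℝ` at `t = 0` yields the integral representation of `K₁`.
-/

open MeasureTheory ProbabilityTheory Real Set

/-- The modified Bessel function of the second kind `K_ν(x)`, defined by its
integral representation `K_ν(x) = ∫₀^∞ exp(-x cosh t) cosh(ν t) dt`. -/
noncomputable def besselK (ν x : ℝ) : ℝ :=
  ∫ t in Set.Ioi (0 : ℝ), Real.exp (-x * Real.cosh t) * Real.cosh (ν * t)

section ChangeOfVariables

variable {E : Type*} [NormedAddCommGroup E] [NormedSpace ℝ E]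

theorem integral_comp_exp (g : ℝ → E) : ∫ t, exp t • g (exp t) = ∫ y in Ioi 0, g y := by
  rw [← range_exp, ← image_univ, integral_image_eq_integral_abs_deriv_smul MeasurableSet.univ
    (fun t _ ↦ (hasDerivAt_exp t).hasDerivWithinAt) exp_injective.injOn]
  simp [abs_of_pos (exp_pos _)]

theorem integrable_comp_exp_iff (g : ℝ → E) :
    Integrable (fun t ↦ exp t • g (exp t)) ↔ IntegrableOn g (Ioi 0) := by
  rw [← range_exp, ← image_univ, integrableOn_image_iff_integrableOn_abs_deriv_smul
    MeasurableSet.univ (fun t _ ↦ (hasDerivAt_exp t).hasDerivWithinAt) exp_injective.injOn]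
  simp [abs_of_pos (exp_pos _)]

end ChangeOfVariables

theorem integral_exp_mul_exp_neg_mul_cosh {ν z : ℝ}
    (h : Integrable fun t ↦ exp (ν * t) * exp (-z * cosh t)) :
    ∫ t, exp (ν * t) * exp (-z * cosh t) = 2 * besselK ν z := by
  have h_neg : Integrable fun t ↦ exp (-(ν * t)) * exp (-z * cosh t) := by
    simpa [cosh_neg] using h.comp_neg
  have h_reflect : ∫ t in Iic 0, exp (ν * t) * exp (-z * cosh t)
      = ∫ t in Ioi 0, exp (-(ν * t)) * exp (-z * cosh t) := by
    rw [← neg_zero, ← integral_comp_neg_Iic]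
    simp [cosh_neg]
  rw [← intervalIntegral.integral_Iic_add_Ioi h.integrableOn h.integrableOn, h_reflect,
    ← integral_add h_neg.integrableOn h.integrableOn, besselK, ← integral_const_mul]
  refine setIntegral_congr_fun measurableSet_Ioi fun t _ ↦ ?_
  rw [cosh_eq (ν * t)]
  ring

theorem integrableOn_exp_neg_div_sub_mul (a : ℝ) {b : ℝ} (ha : 0 ≤ a) (hb : 0 < b) :
    IntegrableOn (fun x ↦ exp (-a / (4 * x) - b * x)) (Ioi 0) := by
  refine (exp_neg_integrableOn_Ioi 0 hb).mono' (by fun_prop) ?_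
  refine (ae_restrict_iff' measurableSet_Ioi).2 (ae_of_all _ fun x (hx : 0 < x) ↦ ?_)
  rw [norm_of_nonneg (exp_pos _).le, exp_le_exp, neg_mul]
  have : 0 ≤ a / (4 * x) := by positivity
  linarith [neg_div (4 * x) a]

theorem integral_exp_neg_div_sub_mul {a b : ℝ} (ha : 0 < a) (hb : 0 < b) :
    ∫ x in Ioi 0, exp (-a / (4 * x) - b * x) = √(a / b) * besselK 1 √(a * b) := by
  set F : ℝ → ℝ := fun x ↦ exp (-a / (4 * x) - b * x)
  obtain ⟨p, hp, rfl⟩ : ∃ p, 0 < p ∧ p ^ 2 = a := ⟨√a, by positivity, sq_sqrt ha.le⟩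
  obtain ⟨q, hq, rfl⟩ : ∃ q, 0 < q ∧ q ^ 2 = b := ⟨√b, by positivity, sq_sqrt hb.le⟩
  set s := p / (2 * q)
  have hs : 0 < s := by positivity
  -- `s` is chosen so that both terms of the exponent get the coefficient `p q / 2`
  have h_subst : ∀ t, F (s * exp t) = exp (-(p * q) * cosh t) := fun t ↦ by
    simp only [F, s, cosh_eq, exp_neg]
    congr 1
    field_simp
    ring
  have h_int : Integrable fun t ↦ exp (1 * t) * exp (-(p * q) * cosh t) := by
    have := (integrableOn_Ioi_comp_mul_left_iff F 0 hs).2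
      (by simpa using integrableOn_exp_neg_div_sub_mul _ (by positivity) (by positivity))
    simpa [h_subst] using (integrable_comp_exp_iff fun y ↦ F (s * y)).2 this
  have h_eq : ∫ t, exp (1 * t) * exp (-(p * q) * cosh t) = s⁻¹ * ∫ x in Ioi 0, F x := by
    simpa [h_subst] using (integral_comp_exp fun y ↦ F (s * y)).trans
      (integral_comp_mul_left_Ioi F 0 hs)
  rw [integral_exp_mul_exp_neg_mul_cosh h_int, eq_inv_mul_iff_mul_eq₀ hs.ne'] at h_eq
  rw [sqrt_div' _ (sq_nonneg q), sqrt_mul (sq_nonneg p), sqrt_sq hp.le, sqrt_sq hq.le, ← h_eq]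
  ring

theorem measureReal_prod_apply {α β : Type*} [MeasurableSpace α] [MeasurableSpace β]
    {μ : Measure α} {ν : Measure β} [IsFiniteMeasure ν] {s : Set (α × β)}
    (hs : MeasurableSet s) : (μ.prod ν).real s = ∫ x, ν.real (Prod.mk x ⁻¹' s) ∂μ := by
  rw [measureReal_def, Measure.prod_apply hs, ← integral_toReal
    (measurable_measure_prodMk_left hs).aemeasurable (ae_of_all _ fun _ ↦ measure_lt_top _ _)]
  rfl

theorem integral_expMeasure {E : Type*} [NormedAddCommGroup E] [NormedSpace ℝ E] {r : ℝ}
    (hr : 0 < r) (f : ℝ → E) :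
    ∫ x, f x ∂expMeasure r = ∫ x in Ioi 0, (r * exp (-(r * x))) • f x := by
  have h_meas : Measurable (exponentialPDF r) := (measurable_exponentialPDFReal r).ennreal_ofReal
  rw [show expMeasure r = volume.withDensity (exponentialPDF r) from rfl,
    integral_withDensity_eq_integral_toReal_smul h_meas
    (ae_of_all _ fun _ ↦ ENNReal.ofReal_lt_top),
    ← integral_Ici_eq_integral_Ioi, ← integral_indicator measurableSet_Ici]
  congr 1 with x
  by_cases hx : 0 ≤ x
  · simp [hx, exponentialPDF_eq, (mul_pos hr (exp_pos _)).le]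
  · simp [hx, exponentialPDF_of_neg (not_le.1 hx)]

theorem expMeasure_real_Iio {r y : ℝ} (hr : 0 < r) (hy : 0 ≤ y) :
    (expMeasure r).real (Iio y) = 1 - exp (-(r * y)) := by
  have := isProbabilityMeasure_expMeasure hr
  have h_ac : expMeasure r ≪ volume := withDensity_absolutelyContinuous _ _
  rw [measureReal_congr (h_ac.ae_eq Iio_ae_eq_Iic),
    ← cdf_eq_real, cdf_expMeasure_eq hr, if_pos hy]

theorem expMeasure_prod_real_mul_lt {r r' c : ℝ} (hr : 0 < r) (hr' : 0 < r') (hc : 0 < c) :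
    ((expMeasure r).prod (expMeasure r')).real {p | p.1 * p.2 < c}
      = 1 - √(4 * c * r * r') * besselK 1 √(4 * c * r * r') := by
  have := isProbabilityMeasure_expMeasure hr
  have := isProbabilityMeasure_expMeasure hr'
  have hs : MeasurableSet {p : ℝ × ℝ | p.1 * p.2 < c} :=
    measurableSet_lt (by fun_prop) measurable_const
  have h_slice : ∀ x ∈ Ioi (0 : ℝ),
      (r * exp (-(r * x))) • (expMeasure r').real (Prod.mk x ⁻¹' {p | p.1 * p.2 < c})
        = r * exp (-(r * x)) - r * exp (-(4 * c * r') / (4 * x) - r * x) := by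
    intro x (hx : 0 < x)
    have h_pre : Prod.mk x ⁻¹' {p : ℝ × ℝ | p.1 * p.2 < c} = Iio (c / x) := by
      ext y
      simp [lt_div_iff₀ hx, mul_comm]
    rw [h_pre, expMeasure_real_Iio hr' (by positivity), smul_eq_mul, mul_sub, mul_one,
      mul_assoc, ← exp_add]
    congr 3
    field_simp
    ring
  have h_total : ∫ x in Ioi 0, r * exp (-(r * x)) = 1 := by
    simpa using (integral_expMeasure hr fun _ ↦ (1 : ℝ)).symm
  have h_sqrt : r * √(4 * c * r' / r) = √(4 * c * r * r') := by
    rw [show 4 * c * r * r' = r ^ 2 * (4 * c * r' / r) by field_simp,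
      sqrt_mul (sq_nonneg r), sqrt_sq hr.le]
  rw [measureReal_prod_apply hs, integral_expMeasure hr,
    setIntegral_congr_fun measurableSet_Ioi h_slice,
    integral_sub (by simpa using (exp_neg_integrableOn_Ioi 0 hr).const_mul r)
      ((integrableOn_exp_neg_div_sub_mul _ (by positivity) hr).const_mul r),
    h_total, integral_const_mul, integral_exp_neg_div_sub_mul (by positivity) hr, ← mul_assoc,
    h_sqrt, show 4 * c * r' * r = 4 * c * r * r' by ring]

/-- If `M` and `Z` are independent exponentials with means `β` and `Nβ'`, then
`P[MZ < c] = 1 - √(4c/(ββ'N)) K₁(√(4c/(ββ'N)))`. -/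
theorem prob_product_exponentials_lt
    {Ω : Type*} [MeasurableSpace Ω] (μ : Measure Ω) [IsProbabilityMeasure μ]
    (β β' N c : ℝ) (hβ : 0 < β) (hβ' : 0 < β') (hN : 0 < N) (hc : 0 < c)
    (M Z : Ω → ℝ) (hMm : Measurable M) (hZm : Measurable Z)
    (hM : Measure.map M μ = expMeasure (1 / β))
    (hZ : Measure.map Z μ = expMeasure (1 / (N * β')))
    (hindep : IndepFun M Z μ) :
    (μ {ω | M ω * Z ω < c}).toReal
      = 1 - Real.sqrt (4 * c / (β * β' * N)) *
          besselK 1 (Real.sqrt (4 * c / (β * β' * N))) := by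
  have h_joint : μ.map (fun ω ↦ (M ω, Z ω))
      = (expMeasure (1 / β)).prod (expMeasure (1 / (N * β'))) := by
    rw [← hM, ← hZ]
    exact (indepFun_iff_map_prod_eq_prod_map_map hMm.aemeasurable hZm.aemeasurable).1 hindep
  have hs : MeasurableSet {p : ℝ × ℝ | p.1 * p.2 < c} :=
    measurableSet_lt (by fun_prop) measurable_const
  calc (μ {ω | M ω * Z ω < c}).toReal
        = (μ.map fun ω ↦ (M ω, Z ω)).real {p | p.1 * p.2 < c} := by
        rw [map_measureReal_apply (hMm.prodMk hZm) hs]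
        rfl
    _ = _ := by
        rw [h_joint, expMeasure_prod_real_mul_lt (by positivity) (by positivity) hc]
        field_simp
end

section
/- Let M be exponentially distributed with mean β_{pu}, and Z be Gamma-distributed with shape k₁ > 0 and scale θ₁ > 0, independent of M. Then for c > 0, P[MZ < c] = 1 - (2/Γ(k₁)) (c/(β_{pu}θ₁))^{k₁/2} K_{k₁}(2√(c/(β_{pu}θ₁))), where K_{k₁} is the modified Bessel function of the second kind of order k₁. -/
open MeasureTheory ProbabilityTheory Real Set

open scoped ENNReal

/-! Conditioning on `Z`, `P[MZ < c] = 1 - E[exp(-a/Z)]` with `a = c/β`. Against the Gamma density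
of rate `r = 1/θ` this expectation is a multiple of `∫₀^∞ z^(k-1) exp(-a/z - r z) dz`, and the substitution
`z = √(a/r) eᵗ` turns `a/z + r z` into `2√(ar) cosh t`, so the integral becomes
`(a/r)^(k/2) ∫_ℝ exp(k t - 2√(ar) cosh t) dt`; folding `t` and `-t` together gives
`2 (a/r)^(k/2) K_k(2√(ar))`. -/

lemma lintegral_eq_lintegral_Ioi_add_comp_neg {g : ℝ → ℝ≥0∞} (hg : Measurable g) :
    ∫⁻ x, g x = ∫⁻ x in Ioi 0, (g x + g (-x)) := by
  have h_neg : ∫⁻ x in Iio 0, g x = ∫⁻ x in Ioi 0, g (-x) := by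
    simpa using lintegral_image_eq_lintegral_abs_deriv_mul (measurableSet_Ioi (a := 0))
      (fun x _ => (hasDerivAt_neg x).hasDerivWithinAt) neg_injective.injOn g
  rw [← lintegral_add_compl g measurableSet_Ioi, compl_Ioi, ← restrict_Iio_eq_restrict_Iic,
    h_neg, lintegral_add_left hg]

lemma lintegral_exp_mul_sub_mul_cosh (ν x : ℝ) :
    ∫⁻ t, ENNReal.ofReal (exp (ν * t - x * cosh t))
      = 2 * ∫⁻ t in Ioi 0, ENNReal.ofReal (exp (-x * cosh t) * cosh (ν * t)) := by
  rw [lintegral_eq_lintegral_Ioi_add_comp_neg (by fun_prop), ← lintegral_const_mul' _ _ (by simp)]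
  congr 1 with t
  rw [← ENNReal.ofReal_add (by positivity) (by positivity), ← ENNReal.ofReal_ofNat 2,
    ← ENNReal.ofReal_mul zero_le_two, cosh_neg, cosh_eq (ν * t), sub_eq_add_neg,
    sub_eq_add_neg, exp_add, exp_add, neg_mul x]
  ring_nf

lemma lintegral_Ioi_eq_lintegral_mul_exp {s : ℝ} (hs : 0 < s) (g : ℝ → ℝ≥0∞) :
    ∫⁻ z in Ioi 0, g z = ∫⁻ t, ENNReal.ofReal (s * exp t) * g (s * exp t) := by
  have h_image : (fun t => s * exp t) '' univ = Ioi 0 := by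
    rw [image_univ, range_comp' (s * ·) exp, range_exp, image_mul_left_Ioi hs, mul_zero]
  rw [← h_image, lintegral_image_eq_lintegral_abs_deriv_mul MeasurableSet.univ
    (fun t _ => ((hasDerivAt_exp t).const_mul s).hasDerivWithinAt)
    ((mul_right_injective₀ hs.ne').comp exp_injective).injOn g, Measure.restrict_univ]
  simp_rw [abs_of_pos (mul_pos hs (exp_pos _))]

lemma lintegral_rpow_mul_exp_neg_div_sub_mul {ν a r : ℝ} (ha : 0 < a) (hr : 0 < r) :
    ∫⁻ z in Ioi 0, ENNReal.ofReal (z ^ (ν - 1) * exp (-(a / z) - r * z))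
      = ENNReal.ofReal ((a / r) ^ (ν / 2)) *
          (2 * ∫⁻ t in Ioi 0, ENNReal.ofReal (exp (-(2 * √(a * r)) * cosh t) * cosh (ν * t))) := by
  set s := √(a / r)
  set q := √(a * r)
  have hs : 0 < s := by positivity
  have hqs : q * s = a := by
    rw [← sqrt_mul (by positivity), show a * r * (a / r) = a ^ 2 by field_simp, sqrt_sq ha.le]
  have hrs : r * s = q := by
    rw [← sqrt_sq hr.le, ← sqrt_mul (sq_nonneg r), show r ^ 2 * (a / r) = a * r by field_simp]
  have h_integrand (t : ℝ) :
      s * exp t * ((s * exp t) ^ (ν - 1) * exp (-(a / (s * exp t)) - r * (s * exp t)))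
        = s ^ ν * exp (ν * t - 2 * q * cosh t) := by
    have h_inv : a / (s * exp t) = q * exp (-t) := by
      rw [← hqs, exp_neg]
      field_simp
    have h_pow : s ^ ν = s * s ^ (ν - 1) := by
      rw [rpow_sub_one hs.ne', mul_div_cancel₀ _ hs.ne']
    have h_exp : exp (ν * t - 2 * q * cosh t)
        = exp t * exp (t * (ν - 1)) * exp (-(q * exp (-t)) - q * exp t) := by
      rw [← exp_add, ← exp_add, cosh_eq]
      congr 1
      ring
    rw [h_inv, ← mul_assoc r, hrs, mul_rpow hs.le (exp_pos t).le, ← exp_mul, h_pow, h_exp]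
    ring
  have hsν : s ^ ν = (a / r) ^ (ν / 2) := by
    rw [show s = (a / r) ^ (1 / 2 : ℝ) from sqrt_eq_rpow _, ← rpow_mul (by positivity)]
    ring_nf
  rw [lintegral_Ioi_eq_lintegral_mul_exp hs, ← hsν, ← lintegral_exp_mul_sub_mul_cosh ν (2 * q),
    ← lintegral_const_mul' _ _ ENNReal.ofReal_ne_top]
  congr 1 with t
  rw [← ENNReal.ofReal_mul (by positivity), ← ENNReal.ofReal_mul (by positivity), h_integrand]

lemma measurable_gammaPDF (a r : ℝ) : Measurable (gammaPDF a r) :=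
  (measurable_gammaPDFReal a r).ennreal_ofReal

lemma besselK_eq_toReal_lintegral (ν x : ℝ) :
    besselK ν x
      = (∫⁻ t in Ioi 0, ENNReal.ofReal (exp (-x * cosh t) * cosh (ν * t))).toReal :=
  integral_eq_lintegral_of_nonneg_ae (ae_of_all _ fun t => by positivity) (by fun_prop)

lemma lintegral_gammaMeasure {a r : ℝ} {f : ℝ → ℝ≥0∞} (hf : Measurable f) :
    ∫⁻ z, f z ∂gammaMeasure a r
      = ∫⁻ z in Ioi 0, ENNReal.ofReal (r ^ a / Gamma a * z ^ (a - 1) * exp (-(r * z))) * f z := by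
  rw [gammaMeasure, lintegral_withDensity_eq_lintegral_mul _ (measurable_gammaPDF a r) hf,
    restrict_Ioi_eq_restrict_Ici, ← lintegral_indicator measurableSet_Ici]
  congr with z
  by_cases hz : 0 ≤ z
  · simp [gammaPDF_of_nonneg hz, hz]
  · simp [gammaPDF_of_neg (not_le.mp hz), hz]

lemma ae_pos_gammaMeasure (a r : ℝ) : ∀ᵐ z ∂gammaMeasure a r, 0 < z := by
  rw [gammaMeasure, ae_withDensity_iff (measurable_gammaPDF a r)]
  filter_upwards [Measure.ae_ne volume 0] with z hz h_pdf
  exact hz.symm.lt_of_le (not_lt.mp fun hz_neg => h_pdf (gammaPDF_of_neg hz_neg))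

lemma integral_exp_neg_div_gammaMeasure {a k r : ℝ} (ha : 0 < a) (hk : 0 < k) (hr : 0 < r) :
    ∫ z, exp (-(a / z)) ∂gammaMeasure k r
      = 2 / Gamma k * (a * r) ^ (k / 2) * besselK k (2 * √(a * r)) := by
  have hC : 0 ≤ r ^ k / Gamma k := div_nonneg (by positivity) (Gamma_pos_of_pos hk).le
  have h_integrand : ∀ z ∈ Ioi (0 : ℝ),
      ENNReal.ofReal (r ^ k / Gamma k * z ^ (k - 1) * exp (-(r * z)))
          * ENNReal.ofReal (exp (-(a / z)))
        = ENNReal.ofReal (r ^ k / Gamma k)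
          * ENNReal.ofReal (z ^ (k - 1) * exp (-(a / z) - r * z)) := by
    intro z (hz : 0 < z)
    rw [← ENNReal.ofReal_mul (by positivity), ← ENNReal.ofReal_mul hC,
      show -(a / z) - r * z = -(a / z) + -(r * z) by ring, exp_add]
    ring_nf
  have h_power : r ^ k * (a / r) ^ (k / 2) = (a * r) ^ (k / 2) := by
    rw [show r ^ k = (r ^ 2) ^ (k / 2) by rw [← rpow_natCast, ← rpow_mul hr.le]; ring_nf,
      ← mul_rpow (by positivity) (by positivity)]
    congr 1
    field_simp
  rw [integral_eq_lintegral_of_nonneg_ae (ae_of_all _ fun _ => (exp_pos _).le) (by fun_prop),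
    lintegral_gammaMeasure (by fun_prop), setLIntegral_congr_fun measurableSet_Ioi h_integrand,
    lintegral_const_mul' _ _ ENNReal.ofReal_ne_top, lintegral_rpow_mul_exp_neg_div_sub_mul ha hr,
    ENNReal.toReal_mul, ENNReal.toReal_mul, ENNReal.toReal_mul, ENNReal.toReal_ofReal hC,
    ENNReal.toReal_ofReal (by positivity), ENNReal.toReal_ofNat, ← besselK_eq_toReal_lintegral,
    ← h_power]
  ring

lemma expMeasure_Iio {r x : ℝ} (hr : 0 < r) (hx : 0 ≤ x) :
    expMeasure r (Iio x) = ENNReal.ofReal (1 - exp (-(r * x))) := by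
  have h_atom : expMeasure r {x} = 0 :=
    withDensity_absolutelyContinuous _ _ (measure_singleton x)
  rw [measure_congr (Iio_ae_eq_Iic' h_atom), expMeasure, gammaMeasure,
    withDensity_apply _ measurableSet_Iic]
  exact (lintegral_exponentialPDF_eq_antiDeriv hr x).trans (if_pos hx ▸ rfl)

lemma ProbabilityTheory.IndepFun.measure_preimage_eq_lintegral {Ω α β : Type*}
    [MeasurableSpace Ω] [MeasurableSpace α] [MeasurableSpace β]
    {μ : Measure Ω} {X : Ω → α} {Y : Ω → β}
    {ν₁ : Measure α} {ν₂ : Measure β} [SigmaFinite ν₁] [SigmaFinite ν₂]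
    (hX : Measurable X) (hY : Measurable Y) (hX_law : μ.map X = ν₁) (hY_law : μ.map Y = ν₂)
    (hXY : IndepFun X Y μ) {s : Set (α × β)} (hs : MeasurableSet s) :
    μ ((fun ω => (X ω, Y ω)) ⁻¹' s) = ∫⁻ x, ν₂ (Prod.mk x ⁻¹' s) ∂ν₁ := by
  subst hX_law hY_law
  rw [← Measure.map_apply (hX.prodMk hY) hs, (indepFun_iff_map_prod_eq_prod_map_map'
    hX.aemeasurable hY.aemeasurable ‹_› ‹_›).mp hXY, Measure.prod_apply hs]

lemma measure_mul_lt_eq_lintegral_one_sub_exp {Ω : Type*} [MeasurableSpace Ω] {μ : Measure Ω}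
    {M Z : Ω → ℝ} {ν : Measure ℝ} [SigmaFinite ν] {r c : ℝ} (hr : 0 < r) (hc : 0 ≤ c)
    (hMm : Measurable M) (hZm : Measurable Z) (hM : μ.map M = expMeasure r) (hZ : μ.map Z = ν)
    (hν : ∀ᵐ z ∂ν, 0 < z) (hindep : IndepFun M Z μ) :
    μ {ω | M ω * Z ω < c} = ∫⁻ z, ENNReal.ofReal (1 - exp (-(r * c / z))) ∂ν := by
  have := isProbabilityMeasure_expMeasure hr
  rw [show {ω | M ω * Z ω < c} = (fun ω => (Z ω, M ω)) ⁻¹' {p : ℝ × ℝ | p.2 * p.1 < c} from rfl,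
    hindep.symm.measure_preimage_eq_lintegral hZm hMm hZ hM
      (measurableSet_lt (by fun_prop) measurable_const)]
  refine lintegral_congr_ae ?_
  filter_upwards [hν] with z hz
  have h_set : Prod.mk z ⁻¹' {p : ℝ × ℝ | p.2 * p.1 < c} = Iio (c / z) := by
    ext m
    simp [lt_div_iff₀ hz]
  rw [h_set, expMeasure_Iio hr (by positivity), mul_div_assoc]

lemma toReal_lintegral_ofReal_one_sub {α : Type*} [MeasurableSpace α] {ν : Measure α}
    [IsProbabilityMeasure ν] {f : α → ℝ} (hf : AEStronglyMeasurable f ν) (h_nonneg : 0 ≤ᵐ[ν] f)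
    (h_le_one : f ≤ᵐ[ν] 1) :
    (∫⁻ x, ENNReal.ofReal (1 - f x) ∂ν).toReal = 1 - ∫ x, f x ∂ν := by
  have h_int : Integrable f ν := Integrable.of_bound hf 1 (by
    filter_upwards [h_nonneg, h_le_one] with x h0 h1
    rwa [Real.norm_of_nonneg h0])
  rw [← integral_eq_lintegral_of_nonneg_ae (f := fun x => 1 - f x)
    (h_le_one.mono fun x hx => sub_nonneg.mpr hx) (aestronglyMeasurable_const.sub hf),
    integral_sub (integrable_const 1) h_int, integral_const, probReal_univ, one_smul]

theorem prob_exponential_gamma_product_lt_general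
    {Ω : Type*} [MeasurableSpace Ω] (μ : Measure Ω)
    (β k₁ θ₁ c : ℝ) (hβ : 0 < β) (hk₁ : 0 < k₁) (hθ₁ : 0 < θ₁) (hc : 0 < c)
    (M Z : Ω → ℝ) (hMm : Measurable M) (hZm : Measurable Z)
    (hM : Measure.map M μ = expMeasure (1 / β))
    (hZ : Measure.map Z μ = gammaMeasure k₁ (1 / θ₁))
    (hindep : IndepFun M Z μ) :
    (μ {ω | M ω * Z ω < c}).toReal
      = 1 - (2 / Real.Gamma k₁) * (c / (β * θ₁)) ^ (k₁ / 2) *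
          besselK k₁ (2 * Real.sqrt (c / (β * θ₁))) := by
  have := isProbabilityMeasure_gammaMeasure hk₁ (one_div_pos.mpr hθ₁)
  have h_le_one : ∀ᵐ z ∂gammaMeasure k₁ (1 / θ₁), exp (-(1 / β * c / z)) ≤ 1 := by
    filter_upwards [ae_pos_gammaMeasure k₁ (1 / θ₁)] with z hz
    rw [exp_le_one_iff, neg_nonpos]
    positivity
  rw [measure_mul_lt_eq_lintegral_one_sub_exp (by positivity) hc.le hMm hZm hM hZ
      (ae_pos_gammaMeasure k₁ (1 / θ₁)) hindep,
    toReal_lintegral_ofReal_one_sub (by fun_prop) (ae_of_all _ fun _ => (exp_pos _).le) h_le_one,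
    integral_exp_neg_div_gammaMeasure (by positivity) hk₁ (by positivity),
    show 1 / β * c * (1 / θ₁) = c / (β * θ₁) by ring]

/-- If `M` is exponential with mean `β` and `Z` is Gamma with shape `k₁` and
scale `θ₁`, independent, then for `c > 0`,
`P[MZ < c] = 1 - (2/Γ(k₁)) (c/(βθ₁))^{k₁/2} K_{k₁}(2√(c/(βθ₁)))`. -/
theorem prob_exponential_gamma_product_lt
    {Ω : Type*} [MeasurableSpace Ω] (μ : Measure Ω) [IsProbabilityMeasure μ]
    (β k₁ θ₁ c : ℝ) (hβ : 0 < β) (hk₁ : 0 < k₁) (hθ₁ : 0 < θ₁) (hc : 0 < c)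
    (M Z : Ω → ℝ) (hMm : Measurable M) (hZm : Measurable Z)
    (hM : Measure.map M μ = expMeasure (1 / β))
    (hZ : Measure.map Z μ = gammaMeasure k₁ (1 / θ₁))
    (hindep : IndepFun M Z μ) :
    (μ {ω | M ω * Z ω < c}).toReal
      = 1 - (2 / Real.Gamma k₁) * (c / (β * θ₁)) ^ (k₁ / 2) *
          besselK k₁ (2 * Real.sqrt (c / (β * θ₁))) :=
  prob_exponential_gamma_product_lt_general μ β k₁ θ₁ c hβ hk₁ hθ₁ hc M Z hMm hZm hM hZ hindep
end
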